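/- Fix x ∈ X and let g : S → ℝ be arbitrary. If for all s ∈ S, pS(s|x,π) > 0 implies pS(s|x,π₀) > 0, then Σ_{e∈E} pE(e|x,π₀) · (pS(Φ(e)|x,π)/pS(Φ(e)|x,π₀)) · g(Φ(e)) = Σ_{e∈E} pE(e|x,π) · g(Φ(e)), where division by zero is interpreted as zero. -/
import Mathlib


open Finset

/-- Marginal embedding distribution of a policy `ρ`:
`pE(e|x,ρ) = ∑ a, ρ(a|x) · pe(x,a,e)`. -/
noncomputable def pE {X A E : Type*} [Fintype A]
    (pe : X → A → E → ℝ) (ρ : X → A → ℝ) (x : X) (e : E) : ℝ :=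
  ∑ a, ρ x a * pe x a e

/-- Doubly marginal distribution over the embedding subset space:
`pS(s|x,ρ) = ∑ e, pE(e|x,ρ) · 𝟙{Φ(e)=s}`. -/
noncomputable def pS {X A E S : Type*} [Fintype A] [Fintype E] [DecidableEq S]
    (pe : X → A → E → ℝ) (ρ : X → A → ℝ) (Φ : E → S) (x : X) (s : S) : ℝ :=
  ∑ e, pE pe ρ x e * (if Φ e = s then 1 else 0)

private lemma pE_fiber_sum {X A E S : Type*} [Fintype A] [Fintype E] [Fintype S] [DecidableEq S]
    (pe : X → A → E → ℝ) (ρ : X → A → ℝ) (Φ : E → S) (x : X) (h : S → ℝ) :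
    ∑ e, pE pe ρ x e * h (Φ e) = ∑ s, pS pe ρ Φ x s * h s := by
  unfold pS
  simp only [Finset.sum_mul]
  rw [Finset.sum_comm]
  apply Finset.sum_congr rfl
  intro e _
  simp [mul_ite, ite_mul]

private lemma pS_nonneg' {X A E S : Type*} [Fintype A] [Fintype E] [DecidableEq S]
    (pe : X → A → E → ℝ) (ρ : X → A → ℝ) (Φ : E → S) (x : X)
    (hρ : ∀ a, 0 ≤ ρ x a) (hpe_nonneg : ∀ x a e, 0 ≤ pe x a e)
    (s : S) : 0 ≤ pS pe ρ Φ x s := by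
  apply Finset.sum_nonneg
  intro e _
  apply mul_nonneg
  · exact Finset.sum_nonneg fun a _ => mul_nonneg (hρ a) (hpe_nonneg x a e)
  · positivity

/-- Key marginalization step in the proof of unbiasedness of GMIPS:
for a fixed context `x` and any `g : S → ℝ`, under common ranking embedding
support, re-weighting the logging marginal embedding distribution by the
doubly marginalized importance weight recovers the target expectation of
`g ∘ Φ`. -/
theorem gmips_marginalization_step
    {X A E S : Type*} [Fintype X] [Fintype A] [Fintype E] [Fintype S] [DecidableEq S]
    [Nonempty X] [Nonempty A] [Nonempty E] [Nonempty S]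
    (p : X → ℝ) (hp_nonneg : ∀ x, 0 ≤ p x) (hp_sum : ∑ x, p x = 1)
    (π π₀ : X → A → ℝ)
    (hπ_nonneg : ∀ x a, 0 ≤ π x a) (hπ_sum : ∀ x, ∑ a, π x a = 1)
    (hπ₀_nonneg : ∀ x a, 0 ≤ π₀ x a) (hπ₀_sum : ∀ x, ∑ a, π₀ x a = 1)
    (pe : X → A → E → ℝ)
    (hpe_nonneg : ∀ x a e, 0 ≤ pe x a e) (hpe_sum : ∀ x a, ∑ e, pe x a e = 1)
    (Φ : E → S) (x : X) (g : S → ℝ)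
    (hsupp : ∀ s, 0 < pS pe π Φ x s → 0 < pS pe π₀ Φ x s) :
    ∑ e, pE pe π₀ x e * (pS pe π Φ x (Φ e) / pS pe π₀ Φ x (Φ e)) * g (Φ e)
      = ∑ e, pE pe π x e * g (Φ e) := by
  simp only [mul_assoc]
  rw [pE_fiber_sum pe π₀ Φ x (fun s => pS pe π Φ x s / pS pe π₀ Φ x s * g s),
      pE_fiber_sum pe π Φ x g]
  · apply Finset.sum_congr rfl
    intro s _
    rcases lt_or_eq_of_le (pS_nonneg' pe π₀ Φ x (hπ₀_nonneg x) hpe_nonneg s) with h0 | h0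
    · field_simp
    · have hz : pS pe π Φ x s = 0 := by
        by_contra hne
        have := hsupp s (lt_of_le_of_ne (pS_nonneg' pe π Φ x (hπ_nonneg x) hpe_nonneg s) (Ne.symm hne))
        linarith
      rw [hz, ← h0]
      ring
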